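/- arXiv:2302.11493 — 3 statements merged into one kernel-verified Lean document; each statement's English description precedes it below -/
import Mathlib

section
/- Let X_I (I = 1,…,N) be smooth vector fields on an open set U ⊆ ℝ⁴ with [X_I, X_J] = C^K_{IJ} X_K for real constants C^K_{IJ}, let λ̂_î (î = 1,…,n) be linearly independent matrices in M₄(ℝ) with [λ̂_î, λ̂_ĵ] = C^k̂_{îĵ} λ̂_k̂, let h : U → GL₄(ℝ) be twice differentiable, and let f_I^î : U → ℝ be differentiable with (L_{X_I} h)^a_μ = f_I^î (λ̂_î)^a_b h^b_μ for each I. Then for all I, J, k̂: X_I(f_J^k̂) − X_J(f_I^k̂) − f_I^î f_J^ĵ C^k̂_{îĵ} = C^K_{IJ} f_K^k̂ on U. -/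
/-- Partial derivative of a scalar function on ℝ⁴ in the μ-th coordinate direction. -/
noncomputable def pd (f : (Fin 4 → ℝ) → ℝ) (μ : Fin 4) (p : Fin 4 → ℝ) : ℝ :=
  fderiv ℝ f p (Pi.single μ 1)

/-- Pointwise Lie bracket of vector fields: [X,Y]^μ = X^ν ∂_ν Y^μ − Y^ν ∂_ν X^μ. -/
noncomputable def lieB (X Y : (Fin 4 → ℝ) → Fin 4 → ℝ) (p : Fin 4 → ℝ) (μ : Fin 4) : ℝ :=
  ∑ ν, (X p ν * pd (fun q => Y q μ) ν p - Y p ν * pd (fun q => X q μ) ν p)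

section Helpers

lemma pd_congr {f g : (Fin 4 → ℝ) → ℝ} {p : Fin 4 → ℝ} (hfg : f =ᶠ[nhds p] g) (μ : Fin 4) :
    pd f μ p = pd g μ p := by
  unfold pd; rw [hfg.fderiv_eq]

lemma pd_congr_open {f g : (Fin 4 → ℝ) → ℝ} {U : Set (Fin 4 → ℝ)} (hU : IsOpen U)
    {p : Fin 4 → ℝ} (hp : p ∈ U) (hfg : ∀ q ∈ U, f q = g q) (μ : Fin 4) :
    pd f μ p = pd g μ p :=
  pd_congr (Filter.eventually_of_mem (hU.mem_nhds hp) hfg) μ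

lemma pd_add {f g : (Fin 4 → ℝ) → ℝ} {p : Fin 4 → ℝ} (hf : DifferentiableAt ℝ f p)
    (hg : DifferentiableAt ℝ g p) (μ : Fin 4) :
    pd (fun q => f q + g q) μ p = pd f μ p + pd g μ p := by
  unfold pd; rw [fderiv_fun_add hf hg]; rfl

lemma pd_sub {f g : (Fin 4 → ℝ) → ℝ} {p : Fin 4 → ℝ} (hf : DifferentiableAt ℝ f p)
    (hg : DifferentiableAt ℝ g p) (μ : Fin 4) :
    pd (fun q => f q - g q) μ p = pd f μ p - pd g μ p := by
  unfold pd; rw [fderiv_fun_sub hf hg]; rfl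

lemma pd_mul {f g : (Fin 4 → ℝ) → ℝ} {p : Fin 4 → ℝ} (hf : DifferentiableAt ℝ f p)
    (hg : DifferentiableAt ℝ g p) (μ : Fin 4) :
    pd (fun q => f q * g q) μ p = pd f μ p * g p + f p * pd g μ p := by
  unfold pd; rw [fderiv_fun_mul hf hg]; simp; ring

lemma pd_sum {ι : Type*} (s : Finset ι) {F : ι → (Fin 4 → ℝ) → ℝ} {p : Fin 4 → ℝ}
    (hF : ∀ i ∈ s, DifferentiableAt ℝ (F i) p) (μ : Fin 4) :
    pd (fun q => ∑ i ∈ s, F i q) μ p = ∑ i ∈ s, pd (F i) μ p := by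
  unfold pd
  rw [fderiv_fun_sum hF]
  simp

lemma pd_const_mul {f : (Fin 4 → ℝ) → ℝ} {p : Fin 4 → ℝ} (hf : DifferentiableAt ℝ f p)
    (c : ℝ) (μ : Fin 4) :
    pd (fun q => c * f q) μ p = c * pd f μ p := by
  unfold pd; rw [fderiv_const_mul hf]; rfl

lemma diff_pd {φ : (Fin 4 → ℝ) → ℝ} {p : Fin 4 → ℝ} (hφ : ContDiffAt ℝ 2 φ p) (ν : Fin 4) :
    DifferentiableAt ℝ (fun q => pd φ ν q) p := by
  have h1 : ContDiffAt ℝ 1 (fderiv ℝ φ) p := hφ.fderiv_right (by norm_num)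
  have h2 : DifferentiableAt ℝ (fderiv ℝ φ) p := h1.differentiableAt one_ne_zero
  exact (ContinuousLinearMap.apply ℝ ℝ (Pi.single ν 1)).differentiableAt.comp p h2

lemma pd_swap {φ : (Fin 4 → ℝ) → ℝ} {p : Fin 4 → ℝ} (hφ : ContDiffAt ℝ 2 φ p) (μ ν : Fin 4) :
    pd (fun q => pd φ ν q) μ p = pd (fun q => pd φ μ q) ν p := by
  have h1 : ContDiffAt ℝ 1 (fderiv ℝ φ) p := hφ.fderiv_right (by norm_num)
  have h2 : DifferentiableAt ℝ (fderiv ℝ φ) p := h1.differentiableAt one_ne_zero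
  have key : ∀ v : Fin 4 → ℝ, fderiv ℝ (fun q => (fderiv ℝ φ q) v) p
      = (fderiv ℝ (fderiv ℝ φ) p).flip v := by
    intro v
    rw [fderiv_clm_apply h2 (differentiableAt_const v)]
    simp
  have hsymm : IsSymmSndFDerivAt ℝ φ p := hφ.isSymmSndFDerivAt (by norm_num)
  have e1 : pd (fun q => pd φ ν q) μ p
      = fderiv ℝ (fderiv ℝ φ) p (Pi.single μ 1) (Pi.single ν 1) := by
    show fderiv ℝ (fun q => fderiv ℝ φ q (Pi.single ν 1)) p (Pi.single μ 1) = _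
    rw [key (Pi.single ν 1)]; rfl
  have e2 : pd (fun q => pd φ μ q) ν p
      = fderiv ℝ (fderiv ℝ φ) p (Pi.single ν 1) (Pi.single μ 1) := by
    show fderiv ℝ (fun q => fderiv ℝ φ q (Pi.single μ 1)) p (Pi.single ν 1) = _
    rw [key (Pi.single μ 1)]; rfl
  rw [e1, e2, hsymm (Pi.single μ 1) (Pi.single ν 1)]

lemma SW {α β : Type*} [Fintype α] [Fintype β] (u : α → ℝ) (c : β → ℝ) (v : α → β → ℝ) :
    ∑ x, u x * ∑ y, c y * v x y = ∑ y, c y * ∑ x, u x * v x y := by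
  simp only [Finset.mul_sum]
  rw [Finset.sum_comm]
  exact Finset.sum_congr rfl fun y _ => Finset.sum_congr rfl fun x _ => by ring

lemma SW1 {α β : Type*} [Fintype α] [Fintype β] (u : α → ℝ) (c : β → ℝ) (v : α → β → ℝ) :
    ∑ x, u x * ∑ y, v x y * c y = ∑ y, (∑ x, u x * v x y) * c y := by
  simp only [Finset.mul_sum, Finset.sum_mul]
  rw [Finset.sum_comm]
  exact Finset.sum_congr rfl fun y _ => Finset.sum_congr rfl fun x _ => by ring

lemma SW1' {α β : Type*} [Fintype α] [Fintype β] (u : α → ℝ) (c : β → ℝ) (v : β → α → ℝ) :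
    ∑ x, (∑ y, c y * v y x) * u x = ∑ y, c y * ∑ x, v y x * u x := by
  simp only [Finset.sum_mul, Finset.mul_sum]
  rw [Finset.sum_comm]
  exact Finset.sum_congr rfl fun y _ => Finset.sum_congr rfl fun x _ => by ring

lemma sum3 {α β γ : Type*} [Fintype α] [Fintype β] [Fintype γ]
    (u : α → β → ℝ) (c : γ → α → β → ℝ) (g : γ → ℝ) :
    ∑ i, ∑ j, u i j * ∑ k, c k i j * g k = ∑ k, (∑ i, ∑ j, u i j * c k i j) * g k := by
  simp only [Finset.mul_sum, Finset.sum_mul]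
  calc ∑ i, ∑ j, ∑ k, u i j * (c k i j * g k)
      = ∑ i, ∑ k, ∑ j, u i j * (c k i j * g k) :=
        Finset.sum_congr rfl fun i _ => Finset.sum_comm
    _ = ∑ k, ∑ i, ∑ j, u i j * (c k i j * g k) := Finset.sum_comm
    _ = ∑ k, ∑ i, ∑ j, u i j * c k i j * g k :=
        Finset.sum_congr rfl fun k _ => Finset.sum_congr rfl fun i _ =>
          Finset.sum_congr rfl fun j _ => by ring

/-- Expansion of the ν-derivative of the Lie-derivative expression. -/
lemma lie_expand {Xf : (Fin 4 → ℝ) → Fin 4 → ℝ} {H : Fin 4 → (Fin 4 → ℝ) → ℝ} {p : Fin 4 → ℝ}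
    (hX : ∀ ρ : Fin 4, ContDiffAt ℝ 2 (fun q => Xf q ρ) p)
    (hH : ∀ ρ : Fin 4, ContDiffAt ℝ 2 (H ρ) p) (μ₀ μ ν : Fin 4) :
    pd (fun q => (∑ ρ, Xf q ρ * pd (H μ₀) ρ q) + ∑ ρ, pd (fun q' => Xf q' ρ) μ q * H ρ q) ν p
    = ∑ ρ, (pd (fun q => Xf q ρ) ν p * pd (H μ₀) ρ p
        + Xf p ρ * pd (fun q => pd (H μ₀) ρ q) ν p
        + pd (fun q => pd (fun q' => Xf q' ρ) μ q) ν p * H ρ p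
        + pd (fun q' => Xf q' ρ) μ p * pd (H ρ) ν p) := by
  have dX : ∀ ρ, DifferentiableAt ℝ (fun q => Xf q ρ) p :=
    fun ρ => (hX ρ).differentiableAt two_ne_zero
  have dH : ∀ ρ, DifferentiableAt ℝ (H ρ) p := fun ρ => (hH ρ).differentiableAt two_ne_zero
  have dpdH : ∀ ρ, DifferentiableAt ℝ (fun q => pd (H μ₀) ρ q) p := fun ρ => diff_pd (hH μ₀) ρ
  have dpdX : ∀ ρ, DifferentiableAt ℝ (fun q => pd (fun q' => Xf q' ρ) μ q) p :=
    fun ρ => diff_pd (hX ρ) μ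
  rw [pd_add (DifferentiableAt.fun_sum fun ρ _ => (dX ρ).fun_mul (dpdH ρ))
      (DifferentiableAt.fun_sum fun ρ _ => (dpdX ρ).fun_mul (dH ρ)),
    pd_sum _ (fun ρ _ => (dX ρ).fun_mul (dpdH ρ)), pd_sum _ (fun ρ _ => (dpdX ρ).fun_mul (dH ρ)),
    ← Finset.sum_add_distrib]
  refine Finset.sum_congr rfl fun ρ _ => ?_
  rw [pd_mul (dX ρ) (dpdH ρ), pd_mul (dpdX ρ) (dH ρ)]
  ring

/-- Expansion of the μ-derivative of the Lie bracket. -/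
lemma pd_lieB {Xf Yf : (Fin 4 → ℝ) → Fin 4 → ℝ} {p : Fin 4 → ℝ}
    (hX : ∀ ρ : Fin 4, ContDiffAt ℝ 2 (fun q => Xf q ρ) p)
    (hY : ∀ ρ : Fin 4, ContDiffAt ℝ 2 (fun q => Yf q ρ) p) (μ ρ : Fin 4) :
    pd (fun q => lieB Xf Yf q ρ) μ p
    = ∑ ν, (pd (fun q => Xf q ν) μ p * pd (fun q => Yf q ρ) ν p
        + Xf p ν * pd (fun q => pd (fun q' => Yf q' ρ) ν q) μ p
        - pd (fun q => Yf q ν) μ p * pd (fun q => Xf q ρ) ν p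
        - Yf p ν * pd (fun q => pd (fun q' => Xf q' ρ) ν q) μ p) := by
  have dX : ∀ ν, DifferentiableAt ℝ (fun q => Xf q ν) p :=
    fun ν => (hX ν).differentiableAt two_ne_zero
  have dY : ∀ ν, DifferentiableAt ℝ (fun q => Yf q ν) p :=
    fun ν => (hY ν).differentiableAt two_ne_zero
  have dpdX : ∀ ν, DifferentiableAt ℝ (fun q => pd (fun q' => Xf q' ρ) ν q) p :=
    fun ν => diff_pd (hX ρ) ν
  have dpdY : ∀ ν, DifferentiableAt ℝ (fun q => pd (fun q' => Yf q' ρ) ν q) p :=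
    fun ν => diff_pd (hY ρ) ν
  unfold lieB
  rw [pd_sum _ (fun ν _ => ((dX ν).fun_mul (dpdY ν)).fun_sub ((dY ν).fun_mul (dpdX ν)))]
  refine Finset.sum_congr rfl fun ν _ => ?_
  rw [pd_sub ((dX ν).fun_mul (dpdY ν)) ((dY ν).fun_mul (dpdX ν)),
    pd_mul (dX ν) (dpdY ν), pd_mul (dY ν) (dpdX ν)]
  ring

/-- Big pointwise algebra: antisymmetrized second-order Lie expansion equals
    the Lie-bracket expression. -/
lemma big_algebra (μ : Fin 4) (XI XJ hm dhμ : Fin 4 → ℝ)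
    (dXI dXJ eXI eXJ dh ddh : Fin 4 → Fin 4 → ℝ)
    (hdh : ∀ ρ, dh ρ μ = dhμ ρ)
    (hs : ∀ ν ρ, ddh ν ρ = ddh ρ ν) :
    ((∑ ν, XI ν * ∑ ρ, (dXJ ν ρ * dh ρ μ + XJ ρ * ddh ν ρ + eXJ ν ρ * hm ρ + dXJ μ ρ * dh ν ρ))
      + ∑ ν, dXI μ ν * ((∑ ρ, XJ ρ * dh ρ ν) + ∑ ρ, dXJ ν ρ * hm ρ))
    - ((∑ ν, XJ ν * ∑ ρ, (dXI ν ρ * dh ρ μ + XI ρ * ddh ν ρ + eXI ν ρ * hm ρ + dXI μ ρ * dh ν ρ))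
      + ∑ ν, dXJ μ ν * ((∑ ρ, XI ρ * dh ρ ν) + ∑ ρ, dXI ν ρ * hm ρ))
    = (∑ ρ, (∑ ν, (XI ν * dXJ ν ρ - XJ ν * dXI ν ρ)) * dhμ ρ)
      + ∑ ρ, (∑ ν, (dXI μ ν * dXJ ν ρ + XI ν * eXJ ν ρ - dXJ μ ν * dXI ν ρ - XJ ν * eXI ν ρ))
          * hm ρ := by
  simp only [← hdh]
  have h10 := hs 1 0
  have h20 := hs 2 0
  have h21 := hs 2 1
  have h30 := hs 3 0
  have h31 := hs 3 1
  have h32 := hs 3 2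
  simp only [Fin.sum_univ_four]
  rw [h10, h20, h21, h30, h31, h32]
  ring

end Helpers

/-- Integrability (commutator) conditions on the symmetry functions f_I^î:
    if smooth vector fields X_I close with structure constants C, the matrices λ̂_î
    are linearly independent and close with structure constants Ĉ, h is a twice
    differentiable invertible vielbein and (L_{X_I} h)^a_μ = f_I^î (λ̂_î)^a_b h^b_μ,
    then X_I(f_J^k̂) − X_J(f_I^k̂) − f_I^î f_J^ĵ Ĉ^k̂_{îĵ} = C^K_{IJ} f_K^k̂ on U. -/
theorem symmetry_function_integrability (N n : ℕ) (U : Set (Fin 4 → ℝ)) (hU : IsOpen U)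
    (X : Fin N → (Fin 4 → ℝ) → Fin 4 → ℝ)
    (C : Fin N → Fin N → Fin N → ℝ)
    (lam : Fin n → Matrix (Fin 4) (Fin 4) ℝ)
    (Ch : Fin n → Fin n → Fin n → ℝ)
    (h : (Fin 4 → ℝ) → Matrix (Fin 4) (Fin 4) ℝ)
    (f : Fin N → Fin n → (Fin 4 → ℝ) → ℝ)
    (hXsm : ∀ (I : Fin N) (μ : Fin 4), ∀ p ∈ U, ContDiffAt ℝ (⊤ : ℕ∞) (fun q => X I q μ) p)
    (hbr : ∀ I J : Fin N, ∀ p ∈ U, ∀ μ : Fin 4,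
      lieB (X I) (X J) p μ = ∑ K, C K I J * X K p μ)
    (hlamind : LinearIndependent ℝ lam)
    (hlambr : ∀ i j : Fin n, lam i * lam j - lam j * lam i = ∑ k, Ch k i j • lam k)
    (hh : ∀ a μ : Fin 4, ∀ p ∈ U, ContDiffAt ℝ 2 (fun q => h q a μ) p)
    (hhinv : ∀ p ∈ U, IsUnit (h p))
    (hf : ∀ (I : Fin N) (i : Fin n), ∀ p ∈ U, DifferentiableAt ℝ (f I i) p)
    (hsym : ∀ I : Fin N, ∀ p ∈ U, ∀ a μ : Fin 4,
      (∑ ν, X I p ν * pd (fun q => h q a μ) ν p)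
        + (∑ ν, pd (fun q => X I q ν) μ p * h p a ν)
      = ∑ i, f I i p * ∑ b, lam i a b * h p b μ) :
    ∀ (I J : Fin N) (k : Fin n), ∀ p ∈ U,
      (∑ μ, X I p μ * pd (f J k) μ p) - (∑ μ, X J p μ * pd (f I k) μ p)
        - (∑ i, ∑ j, f I i p * f J j p * Ch k i j)
      = ∑ K, C K I J * f K k p := by
  intro I J k₀ p hp
  classical
  -- basic differentiability facts
  have hX2 : ∀ (K : Fin N) (ν : Fin 4), ContDiffAt ℝ 2 (fun q => X K q ν) p :=
    fun K ν => (hXsm K ν p hp).of_le (WithTop.coe_le_coe.mpr le_top)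
  have hXd : ∀ (K : Fin N) (ν : Fin 4), DifferentiableAt ℝ (fun q => X K q ν) p :=
    fun K ν => (hX2 K ν).differentiableAt two_ne_zero
  have hhd : ∀ q ∈ U, ∀ (a μ : Fin 4), DifferentiableAt ℝ (fun q' => h q' a μ) q :=
    fun q hq a μ => (hh a μ q hq).differentiableAt two_ne_zero
  have hfd : ∀ (K : Fin N) (i : Fin n), DifferentiableAt ℝ (f K i) p := fun K i => hf K i p hp
  set dcoef : Fin n → ℝ := fun k =>
    (((∑ ν, X I p ν * pd (f J k) ν p) - ∑ ν, X J p ν * pd (f I k) ν p)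
      - ∑ i, ∑ j, f I i p * f J j p * Ch k i j) - ∑ K, C K I J * f K k p with hdcoef
  -- the key pointwise identity
  have key : ∀ a μ : Fin 4,
      ∑ k, dcoef k * (∑ b, lam k a b * h p b μ) = 0 := by
    intro a μ
    -- derivative expansion of the symmetric side
    have pdR : ∀ (L : Fin N) (a' μ' ν : Fin 4),
        pd (fun q => ∑ i, f L i q * ∑ b, lam i a' b * h q b μ') ν p
        = ∑ i, (pd (f L i) ν p * (∑ b, lam i a' b * h p b μ')
            + f L i p * ∑ b, lam i a' b * pd (fun q => h q b μ') ν p) := by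
      intro L a' μ' ν
      rw [pd_sum _ (fun i _ => (hfd L i).fun_mul
        (DifferentiableAt.fun_sum fun b _ => ((hhd p hp b μ').const_mul _)))]
      refine Finset.sum_congr rfl fun i _ => ?_
      rw [pd_mul (hfd L i) (DifferentiableAt.fun_sum fun b _ => ((hhd p hp b μ').const_mul _)),
        pd_sum _ (fun b _ => ((hhd p hp b μ').const_mul _))]
      congr 1
      refine congrArg _ (Finset.sum_congr rfl fun b _ => ?_)
      rw [pd_const_mul (hhd p hp b μ') _]
    -- Claim I: first-order expansion of the Lie derivative of the RHS
    have claimI : ∀ K L : Fin N,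
        ((∑ ν, X K p ν * pd (fun q => ∑ i, f L i q * ∑ b, lam i a b * h q b μ) ν p)
          + ∑ ν, pd (fun q => X K q ν) μ p * (∑ i, f L i p * ∑ b, lam i a b * h p b ν))
        = (∑ i, (∑ ν, X K p ν * pd (f L i) ν p) * (∑ b, lam i a b * h p b μ))
          + ∑ i, ∑ j, f L i p * f K j p * (∑ c, (lam i * lam j) a c * h p c μ) := by
      intro K L
      have e1 : (∑ ν, X K p ν * pd (fun q => ∑ i, f L i q * ∑ b, lam i a b * h q b μ) ν p)
          = (∑ i, (∑ ν, X K p ν * pd (f L i) ν p) * (∑ b, lam i a b * h p b μ))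
            + ∑ i, f L i p * ∑ b, lam i a b * (∑ ν, X K p ν * pd (fun q => h q b μ) ν p) := by
        simp only [pdR L a μ]
        simp only [mul_add, Finset.sum_add_distrib]
        congr 1
        · exact SW1 (fun ν => X K p ν) (fun i => ∑ b, lam i a b * h p b μ)
            (fun ν i => pd (f L i) ν p)
        · refine (SW (fun ν => X K p ν) (fun i => f L i p)
            (fun ν i => ∑ b, lam i a b * pd (fun q => h q b μ) ν p)).trans ?_
          exact Finset.sum_congr rfl fun i _ => congrArg _
            (SW (fun ν => X K p ν) (fun b => lam i a b)
              (fun ν b => pd (fun q => h q b μ) ν p))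
      have e2 : (∑ ν, pd (fun q => X K q ν) μ p * (∑ i, f L i p * ∑ b, lam i a b * h p b ν))
          = ∑ i, f L i p * ∑ b, lam i a b * (∑ ν, pd (fun q => X K q ν) μ p * h p b ν) := by
        refine (SW (fun ν => pd (fun q => X K q ν) μ p) (fun i => f L i p)
          (fun ν i => ∑ b, lam i a b * h p b ν)).trans ?_
        exact Finset.sum_congr rfl fun i _ => congrArg _
          (SW (fun ν => pd (fun q => X K q ν) μ p) (fun b => lam i a b)
            (fun ν b => h p b ν))
      have e3 : ∀ i : Fin n,
          f L i p * ((∑ b, lam i a b * (∑ ν, X K p ν * pd (fun q => h q b μ) ν p))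
            + ∑ b, lam i a b * (∑ ν, pd (fun q => X K q ν) μ p * h p b ν))
          = ∑ j, f L i p * f K j p * (∑ c, (lam i * lam j) a c * h p c μ) := by
        intro i
        rw [← Finset.sum_add_distrib]
        simp only [← mul_add]
        have hsub : ∀ b : Fin 4, (∑ ν, X K p ν * pd (fun q => h q b μ) ν p)
            + ∑ ν, pd (fun q => X K q ν) μ p * h p b ν
            = ∑ j, f K j p * ∑ c, lam j b c * h p c μ := fun b => hsym K p hp b μ
        simp only [hsub]
        rw [SW (fun b => lam i a b) (fun j => f K j p)
          (fun b j => ∑ c, lam j b c * h p c μ)]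
        rw [Finset.mul_sum]
        refine Finset.sum_congr rfl fun j _ => ?_
        rw [show (∑ b, lam i a b * ∑ c, lam j b c * h p c μ)
            = ∑ c, (∑ b, lam i a b * lam j b c) * h p c μ from
          SW1 (fun b => lam i a b) (fun c => h p c μ) (fun b c => lam j b c)]
        have : ∀ c, (lam i * lam j) a c = ∑ b, lam i a b * lam j b c :=
          fun c => Matrix.mul_apply
        simp only [this]
        ring
      rw [e1, e2, add_assoc, ← Finset.sum_add_distrib]
      simp only [← mul_add]
      congr 1
      exact Finset.sum_congr rfl fun i _ => e3 i
    -- Claim II: the commutator identity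
    have hAval : ∀ (L : Fin N) (ν : Fin 4),
        (∑ i, f L i p * ∑ b, lam i a b * h p b ν)
        = (∑ ρ, X L p ρ * pd (fun q' => h q' a ν) ρ p)
          + ∑ ρ, pd (fun q' => X L q' ρ) ν p * h p a ρ :=
      fun L ν => (hsym L p hp a ν).symm
    have hARpd : ∀ (L : Fin N) (ν : Fin 4),
        pd (fun q => ∑ i, f L i q * ∑ b, lam i a b * h q b μ) ν p
        = pd (fun q => (∑ ρ, X L q ρ * pd (fun q' => h q' a μ) ρ q)
            + ∑ ρ, pd (fun q' => X L q' ρ) μ q * h q a ρ) ν p :=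
      fun L ν => (pd_congr_open hU hp (fun q hq => hsym L q hq a μ) ν).symm
    have lieexp : ∀ (L : Fin N) (ν : Fin 4),
        pd (fun q => (∑ ρ, X L q ρ * pd (fun q' => h q' a μ) ρ q)
            + ∑ ρ, pd (fun q' => X L q' ρ) μ q * h q a ρ) ν p
        = ∑ ρ, (pd (fun q => X L q ρ) ν p * pd (fun q' => h q' a μ) ρ p
            + X L p ρ * pd (fun q => pd (fun q' => h q' a μ) ρ q) ν p
            + pd (fun q => pd (fun q' => X L q' ρ) μ q) ν p * h p a ρ
            + pd (fun q' => X L q' ρ) μ p * pd (fun q' => h q' a ρ) ν p) :=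
      fun L ν => lie_expand (fun ρ => hX2 L ρ) (fun ρ => hh a ρ p hp) μ μ ν
    have eSwap : ∀ (L : Fin N) (ρ ν : Fin 4),
        pd (fun q => pd (fun q' => X L q' ρ) μ q) ν p
        = pd (fun q => pd (fun q' => X L q' ρ) ν q) μ p :=
      fun L ρ ν => pd_swap (hX2 L ρ) ν μ
    have hsddh : ∀ ν ρ : Fin 4,
        pd (fun q => pd (fun q' => h q' a μ) ρ q) ν p
        = pd (fun q => pd (fun q' => h q' a μ) ν q) ρ p :=
      fun ν ρ => pd_swap (hh a μ p hp) ν ρ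
    have hlie2 : ∀ ρ : Fin 4, pd (fun q => lieB (X I) (X J) q ρ) μ p
        = ∑ K, C K I J * pd (fun q => X K q ρ) μ p := by
      intro ρ
      rw [pd_congr_open hU hp (fun q hq => hbr I J q hq ρ) μ,
        pd_sum _ (fun K _ => (hXd K ρ).const_mul _)]
      exact Finset.sum_congr rfl fun K _ => pd_const_mul (hXd K ρ) _ _
    have lb2 : ∀ ρ : Fin 4,
        ∑ ν, (pd (fun q => X I q ν) μ p * pd (fun q => X J q ρ) ν p
          + X I p ν * pd (fun q => pd (fun q' => X J q' ρ) ν q) μ p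
          - pd (fun q => X J q ν) μ p * pd (fun q => X I q ρ) ν p
          - X J p ν * pd (fun q => pd (fun q' => X I q' ρ) ν q) μ p)
        = ∑ K, C K I J * pd (fun q => X K q ρ) μ p :=
      fun ρ => (pd_lieB (fun ρ' => hX2 I ρ') (fun ρ' => hX2 J ρ') μ ρ).symm.trans (hlie2 ρ)
    have lb1 : ∀ ρ : Fin 4,
        ∑ ν, (X I p ν * pd (fun q => X J q ρ) ν p - X J p ν * pd (fun q => X I q ρ) ν p)
        = ∑ K, C K I J * X K p ρ := fun ρ => hbr I J p hp ρ
    have claimII :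
        (((∑ ν, X I p ν * pd (fun q => ∑ i, f J i q * ∑ b, lam i a b * h q b μ) ν p)
          + ∑ ν, pd (fun q => X I q ν) μ p * (∑ i, f J i p * ∑ b, lam i a b * h p b ν))
        - ((∑ ν, X J p ν * pd (fun q => ∑ i, f I i q * ∑ b, lam i a b * h q b μ) ν p)
          + ∑ ν, pd (fun q => X J q ν) μ p * (∑ i, f I i p * ∑ b, lam i a b * h p b ν)))
        = ∑ K, C K I J * ∑ i, f K i p * ∑ b, lam i a b * h p b μ := by
      simp only [hARpd, lieexp, eSwap, hAval]
      refine (big_algebra μ (fun ν => X I p ν) (fun ν => X J p ν) (fun ρ => h p a ρ)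
        (fun ρ => pd (fun q' => h q' a μ) ρ p)
        (fun ν ρ => pd (fun q => X I q ρ) ν p) (fun ν ρ => pd (fun q => X J q ρ) ν p)
        (fun ν ρ => pd (fun q => pd (fun q' => X I q' ρ) ν q) μ p)
        (fun ν ρ => pd (fun q => pd (fun q' => X J q' ρ) ν q) μ p)
        (fun ν ρ => pd (fun q' => h q' a ρ) ν p)
        (fun ν ρ => pd (fun q => pd (fun q' => h q' a μ) ρ q) ν p)
        (fun ρ => rfl) hsddh).trans ?_
      rw [show (∑ ρ, (∑ ν, (X I p ν * pd (fun q => X J q ρ) ν p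
            - X J p ν * pd (fun q => X I q ρ) ν p)) * pd (fun q' => h q' a μ) ρ p)
          = ∑ ρ, (∑ K, C K I J * X K p ρ) * pd (fun q' => h q' a μ) ρ p from
        Finset.sum_congr rfl fun ρ _ => by rw [lb1 ρ]]
      rw [show (∑ ρ, (∑ ν, (pd (fun q => X I q ν) μ p * pd (fun q => X J q ρ) ν p
            + X I p ν * pd (fun q => pd (fun q' => X J q' ρ) ν q) μ p
            - pd (fun q => X J q ν) μ p * pd (fun q => X I q ρ) ν p
            - X J p ν * pd (fun q => pd (fun q' => X I q' ρ) ν q) μ p)) * h p a ρ)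
          = ∑ ρ, (∑ K, C K I J * pd (fun q => X K q ρ) μ p) * h p a ρ from
        Finset.sum_congr rfl fun ρ _ => by rw [lb2 ρ]]
      rw [SW1' (fun ρ => pd (fun q' => h q' a μ) ρ p) (fun K => C K I J)
          (fun K ρ => X K p ρ),
        SW1' (fun ρ => h p a ρ) (fun K => C K I J)
          (fun K ρ => pd (fun q => X K q ρ) μ p),
        ← Finset.sum_add_distrib]
      refine Finset.sum_congr rfl fun K _ => ?_
      rw [← mul_add, hsym K p hp a μ]
    -- combine claims
    have main :
        (((∑ i, (∑ ν, X I p ν * pd (f J i) ν p) * (∑ b, lam i a b * h p b μ))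
          + ∑ i, ∑ j, f J i p * f I j p * (∑ c, (lam i * lam j) a c * h p c μ))
        - ((∑ i, (∑ ν, X J p ν * pd (f I i) ν p) * (∑ b, lam i a b * h p b μ))
          + ∑ i, ∑ j, f I i p * f J j p * (∑ c, (lam i * lam j) a c * h p c μ)))
        = ∑ K, C K I J * ∑ i, f K i p * ∑ b, lam i a b * h p b μ := by
      rw [← claimI I J, ← claimI J I]
      exact claimII
    -- the structure-constant contraction of the cross terms
    have ggid : ∀ i j : Fin n,
        (∑ c, ((lam j * lam i) a c * h p c μ - (lam i * lam j) a c * h p c μ))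
        = - ∑ k, Ch k i j * (∑ b, lam k a b * h p b μ) := by
      intro i j
      have ent : ∀ c : Fin 4, (lam j * lam i) a c * h p c μ - (lam i * lam j) a c * h p c μ
          = - ((∑ k, Ch k i j * lam k a c) * h p c μ) := by
        intro c
        have hc := congrArg (fun M : Matrix (Fin 4) (Fin 4) ℝ => M a c) (hlambr i j)
        simp only [Matrix.sub_apply, Matrix.sum_apply, Matrix.smul_apply, smul_eq_mul] at hc
        rw [← hc]
        ring
      simp only [ent]
      rw [Finset.sum_neg_distrib, SW1' (fun c => h p c μ) (fun k => Ch k i j)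
        (fun k c => lam k a c)]
    have cross :
        (∑ i, ∑ j, f J i p * f I j p * (∑ c, (lam i * lam j) a c * h p c μ))
        - ∑ i, ∑ j, f I i p * f J j p * (∑ c, (lam i * lam j) a c * h p c μ)
        = - ∑ k, (∑ i, ∑ j, f I i p * f J j p * Ch k i j) * (∑ b, lam k a b * h p b μ) := by
      have sw0 : (∑ i, ∑ j, f J i p * f I j p * (∑ c, (lam i * lam j) a c * h p c μ))
          = ∑ i, ∑ j, f I i p * f J j p * (∑ c, (lam j * lam i) a c * h p c μ) := by
        rw [Finset.sum_comm]
        exact Finset.sum_congr rfl fun i _ => Finset.sum_congr rfl fun j _ => by ring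
      rw [sw0, ← Finset.sum_sub_distrib]
      simp only [← Finset.sum_sub_distrib, ← mul_sub]
      simp only [ggid]
      simp only [mul_neg, Finset.sum_neg_distrib]
      congr 1
      exact sum3 (fun i j => f I i p * f J j p) (fun k i j => Ch k i j)
        (fun k => ∑ b, lam k a b * h p b μ)
    have conv : ∑ K, C K I J * ∑ i, f K i p * ∑ b, lam i a b * h p b μ
        = ∑ k, (∑ K, C K I J * f K k p) * (∑ b, lam k a b * h p b μ) := by
      refine (SW1 (fun K => C K I J) (fun k => ∑ b, lam k a b * h p b μ)
        (fun K k => f K k p)).trans ?_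
      exact Finset.sum_congr rfl fun k _ => rfl
    have keyeq :
        (∑ k, (∑ ν, X I p ν * pd (f J k) ν p) * (∑ b, lam k a b * h p b μ))
        - (∑ k, (∑ ν, X J p ν * pd (f I k) ν p) * (∑ b, lam k a b * h p b μ))
        - (∑ k, (∑ i, ∑ j, f I i p * f J j p * Ch k i j) * (∑ b, lam k a b * h p b μ))
        - (∑ k, (∑ K, C K I J * f K k p) * (∑ b, lam k a b * h p b μ)) = 0 := by
      rw [← conv]
      linarith [main, cross]
    simp only [hdcoef]
    simp only [sub_mul, Finset.sum_sub_distrib]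
    exact keyeq
  -- linear-algebra endgame
  have hM : (∑ k, dcoef k • lam k) * h p = 0 := by
    ext a μ
    have h1 : ((∑ k, dcoef k • lam k) * h p) a μ
        = ∑ b, (∑ k, dcoef k * lam k a b) * h p b μ := by
      simp [Matrix.mul_apply, Matrix.sum_apply, Matrix.smul_apply, smul_eq_mul]
    rw [h1, SW1' (fun b => h p b μ) dcoef (fun k b => lam k a b)]
    simpa using key a μ
  have hM0 : (∑ k, dcoef k • lam k) = 0 := by
    have hu : h p * ((hhinv p hp).unit⁻¹ : (Matrix (Fin 4) (Fin 4) ℝ)ˣ) = 1 :=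
      (hhinv p hp).mul_val_inv
    calc (∑ k, dcoef k • lam k)
        = (∑ k, dcoef k • lam k) * (h p * ((hhinv p hp).unit⁻¹ : (Matrix (Fin 4) (Fin 4) ℝ)ˣ)) := by
          rw [hu, mul_one]
      _ = ((∑ k, dcoef k • lam k) * h p) * ((hhinv p hp).unit⁻¹ : (Matrix (Fin 4) (Fin 4) ℝ)ˣ) := by
          rw [mul_assoc]
      _ = 0 := by rw [hM, zero_mul]
  have dz : ∀ k, dcoef k = 0 := Fintype.linearIndependent_iff.mp hlamind dcoef hM0
  have := dz k₀
  rw [hdcoef] at this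
  simp only at this
  linarith [this]
end

section
/- A differentiable map h : U → M₄(ℝ) (U = ℝ² × (0,π) × ℝ with coordinates (t,r,θ,φ)) satisfies (L_{X_I} h)^a_μ = f_I^î (λ̂_î)^a_b h^b_μ for the three spherical symmetry generators X₁, X₂, X₃ with the spherically symmetric symmetry functions f_I^î if and only if there exist functions A₁,…,A₆ of (t,r) alone such that the rows of h are h^1 = (A₁, A₂, 0, 0), h^2 = (A₃, A₄, 0, 0), h^3 = (0, 0, A₅, −A₆ sinθ), h^4 = (0, 0, A₆, A₅ sinθ). -/
open Real

/-- U = ℝ² × (0,π) × ℝ in coordinates (t,r,θ,φ). -/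
def Usph : Set (Fin 4 → ℝ) := {p | 0 < p 2 ∧ p 2 < Real.pi}

/-- The spherical symmetry generators X₁, X₂, X₃. -/
noncomputable def Xsph : Fin 3 → (Fin 4 → ℝ) → Fin 4 → ℝ :=
  ![fun p => ![0, 0, Real.sin (p 3), Real.cos (p 3) / Real.tan (p 2)],
    fun p => ![0, 0, -Real.cos (p 3), Real.sin (p 3) / Real.tan (p 2)],
    fun _ => ![0, 0, 0, 1]]

/-- The isotropy matrices λ̂₁, λ̂₂, λ̂₃. -/
def lamIso : Fin 3 → Matrix (Fin 4) (Fin 4) ℝ :=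
  ![!![0,0,0,0; 0,0,0,0; 0,0,0,1; 0,0,-1,0],
    !![0,0,0,0; 0,0,-1,0; 0,1,0,0; 0,0,0,0],
    !![0,0,0,0; 0,0,0,-1; 0,0,0,0; 0,1,0,0]]

/-- The spherically symmetric symmetry functions. -/
noncomputable def fsph : Fin 3 → Fin 3 → (Fin 4 → ℝ) → ℝ :=
  fun I i p =>
    if I = 0 ∧ i = 0 then Real.cos (p 3) / Real.sin (p 2)
    else if I = 1 ∧ i = 0 then Real.sin (p 3) / Real.sin (p 2)
    else 0

/-! The `X₃` equation says `∂_φ h = 0`. Combining the `X₁` and `X₂` equations with coefficients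
`(sin φ, -cos φ)` eliminates the isotropy term and gives `∂_θ h^a_μ = δ_μφ cot θ h^a_φ`; with
coefficients `(cos φ, sin φ)` it eliminates `∂_θ` and leaves algebraic relations which force the
block form at each point. So the first three columns depend on `(t, r)` only, and the block form
expresses the last column through them. Conversely, for the block form these reduced equations
hold, and they imply the original ones. -/

open Function Filter Topology Set

lemma hasDerivAt_pd {f : (Fin 4 → ℝ) → ℝ} {p : Fin 4 → ℝ} (ν : Fin 4)
    (hf : DifferentiableAt ℝ f p) :
    HasDerivAt (fun s => f (update p ν s)) (pd f ν p) (p ν) := by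
  have hf' : HasFDerivAt f (fderiv ℝ f p) (update p ν (p ν)) := by
    rw [update_eq_self]; exact hf.hasFDerivAt
  exact hf'.comp_hasDerivAt (p ν) (hasDerivAt_update p ν (p ν))

lemma pd_eq_of_hasDerivAt {f : (Fin 4 → ℝ) → ℝ} {p : Fin 4 → ℝ} {ν : Fin 4} {g : ℝ → ℝ}
    {g' : ℝ} (hf : DifferentiableAt ℝ f p) (hfg : ∀ᶠ s in 𝓝 (p ν), f (update p ν s) = g s)
    (hg : HasDerivAt g g' (p ν)) : pd f ν p = g' :=
  (hasDerivAt_pd ν hf).unique (hg.congr_of_eventuallyEq hfg)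

lemma apply_update_eq_of_pd_eq_zero {f : (Fin 4 → ℝ) → ℝ} {p : Fin 4 → ℝ} {ν : Fin 4}
    {S : Set ℝ} (hS : IsOpen S) (hSc : IsPreconnected S)
    (hf : ∀ s ∈ S, DifferentiableAt ℝ f (update p ν s))
    (hf0 : ∀ s ∈ S, pd f ν (update p ν s) = 0) {s t : ℝ} (hs : s ∈ S) (ht : t ∈ S) :
    f (update p ν s) = f (update p ν t) := by
  have hderiv : ∀ s ∈ S, HasDerivAt (fun s => f (update p ν s)) 0 s := fun s hs => by
    simpa [hf0 s hs] using hasDerivAt_pd ν (hf s hs)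
  exact hS.is_const_of_deriv_eq_zero hSc
    (fun s hs => (hderiv s hs).differentiableAt.differentiableWithinAt)
    (fun s hs => (hderiv s hs).deriv) hs ht

lemma sin_pos_of_mem_Usph {p : Fin 4 → ℝ} (hp : p ∈ Usph) : 0 < sin (p 2) :=
  sin_pos_of_pos_of_lt_pi hp.1 hp.2

lemma update_mem_Usph {p : Fin 4 → ℝ} (hp : p ∈ Usph) {ν : Fin 4} (hν : ν ≠ 2) (s : ℝ) :
    update p ν s ∈ Usph := by
  simpa [Usph, update_of_ne hν.symm] using hp

lemma update_two_mem_Usph (p : Fin 4 → ℝ) {s : ℝ} (hs : s ∈ Ioo 0 π) : update p 2 s ∈ Usph := by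
  simpa [Usph] using hs

lemma apply_eq_of_pd_two_of_pd_three_eq_zero {f : (Fin 4 → ℝ) → ℝ}
    (hf : ∀ p ∈ Usph, DifferentiableAt ℝ f p) (hθ : ∀ p ∈ Usph, pd f 2 p = 0)
    (hφ : ∀ p ∈ Usph, pd f 3 p = 0) {p : Fin 4 → ℝ} (hp : p ∈ Usph) :
    f p = f ![p 0, p 1, π / 2, π / 2] := by
  have hπ : π / 2 ∈ Ioo 0 π := ⟨by positivity, by linarith [pi_pos]⟩
  set q := update p 2 (π / 2)
  have hq : q ∈ Usph := update_two_mem_Usph p hπ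
  have hθline : f p = f q := by
    simpa using apply_update_eq_of_pd_eq_zero isOpen_Ioo isPreconnected_Ioo
      (fun s hs => hf _ (update_two_mem_Usph p hs)) (fun s hs => hθ _ (update_two_mem_Usph p hs))
      ⟨hp.1, hp.2⟩ hπ
  have hφline : f q = f (update q 3 (π / 2)) := by
    simpa using apply_update_eq_of_pd_eq_zero isOpen_univ isPreconnected_univ
      (fun s _ => hf _ (update_mem_Usph hq (by decide) s))
      (fun s _ => hφ _ (update_mem_Usph hq (by decide) s)) (mem_univ (q 3)) (mem_univ (π / 2))
  rw [hθline, hφline]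
  congr 1
  ext i
  fin_cases i <;> simp [q]

lemma pd_const (c : ℝ) (μ : Fin 4) (p : Fin 4 → ℝ) : pd (fun _ => c) μ p = 0 := by
  simp [pd]

lemma pd_apply_three_mul_apply_two {u v : ℝ → ℝ} {u' v' : ℝ} {p : Fin 4 → ℝ}
    (hu : HasDerivAt u u' (p 3)) (hv : HasDerivAt v v' (p 2)) (μ : Fin 4) :
    pd (fun q => u (q 3) * v (q 2)) μ p =
      if μ = 2 then u (p 3) * v' else if μ = 3 then u' * v (p 2) else 0 := by
  have hf : DifferentiableAt ℝ (fun q : Fin 4 → ℝ => u (q 3) * v (q 2)) p :=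
    (hu.differentiableAt.comp p (differentiableAt_apply 3 p)).mul
      (hv.differentiableAt.comp p (differentiableAt_apply 2 p))
  refine pd_eq_of_hasDerivAt hf (Eventually.of_forall fun s => rfl) ?_
  fin_cases μ <;> simp
  · exact hasDerivAt_const _ _
  · exact hasDerivAt_const _ _
  · exact hv.const_mul _
  · exact hu.mul_const _

lemma pd_apply_three {u : ℝ → ℝ} {u' : ℝ} {p : Fin 4 → ℝ} (hu : HasDerivAt u u' (p 3))
    (μ : Fin 4) : pd (fun q => u (q 3)) μ p = if μ = 3 then u' else 0 := by
  have h := pd_apply_three_mul_apply_two hu (hasDerivAt_const (p 2) (1 : ℝ)) μ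
  simp only [mul_one, mul_zero] at h
  rw [h]
  split_ifs <;> simp_all

lemma hasDerivAt_inv_tan {x : ℝ} (hx : sin x ≠ 0) :
    HasDerivAt (fun s => (tan s)⁻¹) (-1 / sin x ^ 2) x := by
  have h : HasDerivAt (fun s => cos s / sin s)
      ((-sin x * sin x - cos x * cos x) / sin x ^ 2) x :=
    (hasDerivAt_cos x).div (hasDerivAt_sin x) hx
  simp_rw [tan_eq_sin_div_cos, inv_div]
  convert h using 2
  linear_combination sin_sq_add_cos_sq x

lemma pd_sin_three (p : Fin 4 → ℝ) (μ : Fin 4) :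
    pd (fun q => sin (q 3)) μ p = if μ = 3 then cos (p 3) else 0 :=
  pd_apply_three (hasDerivAt_sin (p 3)) μ

lemma pd_neg_cos_three (p : Fin 4 → ℝ) (μ : Fin 4) :
    pd (fun q => -cos (q 3)) μ p = if μ = 3 then sin (p 3) else 0 := by
  simpa using pd_apply_three (u := fun s => -cos s) (hasDerivAt_cos (p 3)).neg μ

lemma pd_cos_three_div_tan_two {p : Fin 4 → ℝ} (hp : p ∈ Usph) (μ : Fin 4) :
    pd (fun q => cos (q 3) / tan (q 2)) μ p =
      if μ = 2 then -cos (p 3) / sin (p 2) ^ 2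
      else if μ = 3 then -sin (p 3) / tan (p 2) else 0 := by
  simpa [div_eq_mul_inv] using pd_apply_three_mul_apply_two (hasDerivAt_cos (p 3))
    (hasDerivAt_inv_tan (sin_pos_of_mem_Usph hp).ne') μ

lemma pd_sin_three_div_tan_two {p : Fin 4 → ℝ} (hp : p ∈ Usph) (μ : Fin 4) :
    pd (fun q => sin (q 3) / tan (q 2)) μ p =
      if μ = 2 then -sin (p 3) / sin (p 2) ^ 2
      else if μ = 3 then cos (p 3) / tan (p 2) else 0 := by
  simpa [div_eq_mul_inv] using pd_apply_three_mul_apply_two (hasDerivAt_sin (p 3))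
    (hasDerivAt_inv_tan (sin_pos_of_mem_Usph hp).ne') μ

noncomputable def sphericalForm (c : Fin 6 → ℝ) (θ : ℝ) : Matrix (Fin 4) (Fin 4) ℝ :=
  !![c 0, c 1, 0, 0; c 2, c 3, 0, 0; 0, 0, c 4, -c 5 * sin θ; 0, 0, c 5, c 4 * sin θ]

def sphericalCoeffs (H : Matrix (Fin 4) (Fin 4) ℝ) : Fin 6 → ℝ :=
  ![H 0 0, H 0 1, H 1 0, H 1 1, H 2 2, H 3 2]

lemma eq_sphericalForm_of_isotropy {H : Matrix (Fin 4) (Fin 4) ℝ} {θ : ℝ} (hθ : sin θ ≠ 0)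
    (hH : ∀ a μ : Fin 4, (if μ = 3 then H a 2 else 0) - (if μ = 2 then H a 3 / sin θ ^ 2 else 0)
      = (∑ b, lamIso 0 a b * H b μ) / sin θ) :
    H = sphericalForm (sphericalCoeffs H) θ := by
  -- each `hH a μ` used here pins down the entry outside the coefficient positions it is named after
  have h02 := hH 0 3
  have h12 := hH 1 3
  have h03 := hH 0 2
  have h13 := hH 1 2
  have h20 := hH 3 0
  have h21 := hH 3 1
  have h30 := hH 2 0
  have h31 := hH 2 1
  have h23 := hH 2 2
  have h33 := hH 3 2
  simp [lamIso, Fin.sum_univ_four, hθ] at h02 h12 h03 h13 h20 h21 h30 h31 h23 h33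
  field_simp at h20 h21 h30 h31 h23 h33
  ext a μ
  fin_cases a <;> fin_cases μ <;> simp [sphericalForm, sphericalCoeffs] <;> linarith

lemma hasDerivAt_sphericalForm (c : Fin 6 → ℝ) {θ : ℝ} (hθ : sin θ ≠ 0) (a μ : Fin 4) :
    HasDerivAt (fun s => sphericalForm c s a μ)
      (if μ = 3 then sphericalForm c θ a 3 / tan θ else 0) θ := by
  have hcot : ∀ x, x * sin θ / tan θ = x * cos θ := fun x => by
    rw [tan_eq_sin_div_cos, div_div_eq_mul_div, mul_assoc, mul_div_assoc, mul_div_cancel_left₀ _ hθ]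
  fin_cases a <;> fin_cases μ <;> simp [sphericalForm, neg_div, hcot, hasDerivAt_const]
  · exact ((hasDerivAt_sin θ).const_mul _).neg
  · exact (hasDerivAt_sin θ).const_mul _

lemma sphericalCoeffs_congr {H H' : Matrix (Fin 4) (Fin 4) ℝ}
    (hHH' : ∀ a μ, μ ≠ 3 → H a μ = H' a μ) : sphericalCoeffs H = sphericalCoeffs H' := by
  ext k
  fin_cases k <;> exact hHH' _ _ (by decide)

def IsSphericallySymmetricAt (h : (Fin 4 → ℝ) → Matrix (Fin 4) (Fin 4) ℝ) (p : Fin 4 → ℝ) :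
    Prop :=
  ∀ I : Fin 3, ∀ a μ : Fin 4,
    (∑ ν, Xsph I p ν * pd (fun q => h q a μ) ν p) + (∑ ν, pd (fun q => Xsph I q ν) μ p * h p a ν)
      = ∑ i, fsph I i p * ∑ b, lamIso i a b * h p b μ

section
variable {h : (Fin 4 → ℝ) → Matrix (Fin 4) (Fin 4) ℝ} {p : Fin 4 → ℝ}

lemma IsSphericallySymmetricAt.pd_three_eq_zero (hS : IsSphericallySymmetricAt h p)
    (a μ : Fin 4) :
    pd (fun q => h q a μ) 3 p = 0 := by
  simpa [Xsph, fsph, Fin.sum_univ_four, pd_const] using hS 2 a μ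

lemma IsSphericallySymmetricAt.pd_two_eq (hp : p ∈ Usph) (hS : IsSphericallySymmetricAt h p)
    (a μ : Fin 4) :
    pd (fun q => h q a μ) 2 p = if μ = 3 then h p a 3 / tan (p 2) else 0 := by
  have e0 := hS 0 a μ
  have e1 := hS 1 a μ
  simp [Xsph, fsph, Fin.sum_univ_four, pd_const, pd_sin_three, pd_neg_cos_three,
    pd_cos_three_div_tan_two hp, pd_sin_three_div_tan_two hp, hS.pd_three_eq_zero] at e0 e1
  suffices h : (sin (p 3) ^ 2 + cos (p 3) ^ 2) * pd (fun q => h q a μ) 2 p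
      = (sin (p 3) ^ 2 + cos (p 3) ^ 2) * if μ = 3 then h p a 3 / tan (p 2) else 0 by
    simpa using h
  split_ifs at e0 e1 ⊢ <;> first | omega | linear_combination sin (p 3) * e0 - cos (p 3) * e1

lemma IsSphericallySymmetricAt.isotropy (hp : p ∈ Usph) (hS : IsSphericallySymmetricAt h p)
    (a μ : Fin 4) :
    (if μ = 3 then h p a 2 else 0) - (if μ = 2 then h p a 3 / sin (p 2) ^ 2 else 0)
      = (∑ b, lamIso 0 a b * h p b μ) / sin (p 2) := by
  have e0 := hS 0 a μ
  have e1 := hS 1 a μ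
  simp [Xsph, fsph, Fin.sum_univ_four, pd_const, pd_sin_three, pd_neg_cos_three,
    pd_cos_three_div_tan_two hp, pd_sin_three_div_tan_two hp, hS.pd_three_eq_zero] at e0 e1
  suffices h : (sin (p 3) ^ 2 + cos (p 3) ^ 2) *
      ((if μ = 3 then h p a 2 else 0) - (if μ = 2 then h p a 3 / sin (p 2) ^ 2 else 0))
      = (sin (p 3) ^ 2 + cos (p 3) ^ 2) * ((∑ b, lamIso 0 a b * h p b μ) / sin (p 2)) by
    simpa using h
  simp only [Fin.sum_univ_four]
  split_ifs at e0 e1 ⊢ <;> first | omega | linear_combination cos (p 3) * e0 + sin (p 3) * e1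

lemma isSphericallySymmetricAt_of_eq_sphericalForm (hp : p ∈ Usph) {c : Fin 6 → ℝ}
    (hH : h p = sphericalForm c (p 2))
    (h3 : ∀ a μ, pd (fun q => h q a μ) 3 p = 0)
    (h2 : ∀ a μ, pd (fun q => h q a μ) 2 p = if μ = 3 then h p a 3 / tan (p 2) else 0) :
    IsSphericallySymmetricAt h p := by
  have hs := (sin_pos_of_mem_Usph hp).ne'
  intro I a μ
  fin_cases I <;>
    simp only [Fin.sum_univ_four, Fin.sum_univ_three, h3, h2, Xsph, fsph] <;>
    simp [pd_const, pd_sin_three, pd_neg_cos_three,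
      pd_cos_three_div_tan_two hp, pd_sin_three_div_tan_two hp] <;>
    rw [hH] <;>
    fin_cases a <;> fin_cases μ <;>
    simp [lamIso, sphericalForm, tan_eq_sin_div_cos, div_div_eq_mul_div] <;> field_simp <;> ring


lemma isSphericallySymmetricAt_of_forall_eq_sphericalForm
    (hdiff : ∀ a μ : Fin 4, ∀ p ∈ Usph, DifferentiableAt ℝ (fun q => h q a μ) p)
    {A : Fin 6 → ℝ → ℝ → ℝ}
    (hA : ∀ q ∈ Usph, h q = sphericalForm (fun k => A k (q 0) (q 1)) (q 2))
    (hp : p ∈ Usph) : IsSphericallySymmetricAt h p := by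
  have hs := (sin_pos_of_mem_Usph hp).ne'
  refine isSphericallySymmetricAt_of_eq_sphericalForm hp (hA p hp) (fun a μ => ?_) (fun a μ => ?_)
  · refine pd_eq_of_hasDerivAt (hdiff a μ p hp) (Eventually.of_forall fun s => ?_)
      (hasDerivAt_const _ (h p a μ))
    rw [hA _ (update_mem_Usph hp (by decide) s), hA p hp]
    simp
  · have hline : ∀ᶠ s in 𝓝 (p 2), h (update p 2 s) a μ
        = sphericalForm (fun k => A k (p 0) (p 1)) s a μ := by
      filter_upwards [isOpen_Ioo.mem_nhds (show p 2 ∈ Ioo 0 π from hp)] with s hs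
      rw [hA _ (update_two_mem_Usph p hs)]
      simp
    rw [hA p hp]
    exact pd_eq_of_hasDerivAt (hdiff a μ p hp) hline (hasDerivAt_sphericalForm _ hs a μ)

lemma exists_forall_eq_sphericalForm
    (hdiff : ∀ a μ : Fin 4, ∀ p ∈ Usph, DifferentiableAt ℝ (fun q => h q a μ) p)
    (hS : ∀ p ∈ Usph, IsSphericallySymmetricAt h p) :
    ∃ A : Fin 6 → ℝ → ℝ → ℝ,
      ∀ p ∈ Usph, h p = sphericalForm (fun k => A k (p 0) (p 1)) (p 2) := by
  refine ⟨fun k t r => sphericalCoeffs (h ![t, r, π / 2, π / 2]) k, fun p hp => ?_⟩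
  have hcoeffs : sphericalCoeffs (h p) = sphericalCoeffs (h ![p 0, p 1, π / 2, π / 2]) :=
    sphericalCoeffs_congr fun a μ hμ => apply_eq_of_pd_two_of_pd_three_eq_zero (hdiff a μ)
      (fun q hq => by simp [(hS q hq).pd_two_eq hq, hμ])
      (fun q hq => (hS q hq).pd_three_eq_zero a μ) hp
  change h p = sphericalForm (sphericalCoeffs (h ![p 0, p 1, π / 2, π / 2])) (p 2)
  rw [← hcoeffs]
  exact eq_sphericalForm_of_isotropy (sin_pos_of_mem_Usph hp).ne' ((hS p hp).isotropy hp)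

end

/-- A differentiable vielbein satisfies (L_{X_I} h)^a_μ = f_I^î (λ̂_î)^a_b h^b_μ for the
    spherical symmetry generators with the spherically symmetric symmetry functions iff
    it has the block form with six functions A₁,…,A₆ of (t,r) alone. -/
theorem spherically_symmetric_vielbein
    (h : (Fin 4 → ℝ) → Matrix (Fin 4) (Fin 4) ℝ)
    (hdiff : ∀ a μ : Fin 4, ∀ p ∈ Usph, DifferentiableAt ℝ (fun q => h q a μ) p) :
    (∀ I : Fin 3, ∀ p ∈ Usph, ∀ a μ : Fin 4,
      (∑ ν, Xsph I p ν * pd (fun q => h q a μ) ν p)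
        + (∑ ν, pd (fun q => Xsph I q ν) μ p * h p a ν)
      = ∑ i, fsph I i p * ∑ b, lamIso i a b * h p b μ)
    ↔ (∃ A : Fin 6 → ℝ → ℝ → ℝ, ∀ p ∈ Usph,
        h p = !![A 0 (p 0) (p 1), A 1 (p 0) (p 1), 0, 0;
                 A 2 (p 0) (p 1), A 3 (p 0) (p 1), 0, 0;
                 0, 0, A 4 (p 0) (p 1), -(A 5 (p 0) (p 1)) * Real.sin (p 2);
                 0, 0, A 5 (p 0) (p 1), A 4 (p 0) (p 1) * Real.sin (p 2)]) := by
  constructor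
  · intro hS
    exact exists_forall_eq_sphericalForm hdiff fun p hp I a μ => hS I p hp a μ
  · rintro ⟨A, hA⟩ I p hp a μ
    exact isSphericallySymmetricAt_of_forall_eq_sphericalForm hdiff hA hp I a μ
end

section
/- Let k ∈ ℝ, let I ⊆ ℝ be an open interval, and let a : I → (0,∞), W₁, W₂ : I → ℝ be differentiable functions satisfying on I: a W₁′ + a′ W₁ = 0, W₁ W₂ = 0, a W₂′ + a′ W₂ = 0, and W₂² a² − W₁² a² = k. Then exactly one of the following holds: (i) k > 0, W₁ ≡ 0, and either W₂ = √k / a or W₂ = −√k / a on I; (ii) k < 0, W₂ ≡ 0, and either W₁ = √(−k) / a or W₁ = −√(−k) / a on I; (iii) k = 0 and W₁ ≡ W₂ ≡ 0 on I. -/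
/-!
Since `(a W)' = a W' + a' W`, the first and third equations say that `a W₁` and `a W₂` are
constant on the interval. Pointwise, `W₁ W₂ = 0` together with `(W₂² - W₁²) a² = k` forces
`W₁ = 0` when `k > 0` and both vanish when `k = 0`. For `k > 0` then `(a W₂)² = k` with `a W₂`
constant, so `W₂ = √k / a` or `W₂ = -√k / a` throughout `I`; the case `k < 0` is the same with
`W₁` and `W₂` exchanged.
-/

open Real

theorem exactlyOne_of_trichotomy {α : Type*} [LinearOrder α] {k b : α} {P₁ P₂ Q R : Prop}
    (hP : b < k → P₁ ∧ P₂) (hQ : k < b → Q) (hR : k = b → R) :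
    (b < k ∧ P₁ ∧ P₂ ∧ ¬(k < b ∧ Q) ∧ ¬(k = b ∧ R)) ∨
      (¬(b < k ∧ P₁ ∧ P₂) ∧ (k < b ∧ Q) ∧ ¬(k = b ∧ R)) ∨
      (¬(b < k ∧ P₁ ∧ P₂) ∧ ¬(k < b ∧ Q) ∧ (k = b ∧ R)) := by
  rcases lt_trichotomy k b with hk | rfl | hk
  · exact .inr <| .inl ⟨fun h => h.1.not_gt hk, ⟨hk, hQ hk⟩, fun h => hk.ne h.1⟩
  · exact .inr <| .inr ⟨fun h => h.1.false, fun h => h.1.false, rfl, hR rfl⟩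
  · exact .inl ⟨hk, (hP hk).1, (hP hk).2, fun h => h.1.not_gt hk, fun h => hk.ne' h.1⟩

section

variable {I : Set ℝ} {a f g : ℝ → ℝ}

theorem mul_eq_mul_of_mul_deriv_add_deriv_mul_eq_zero (hIopen : IsOpen I)
    (hIconn : IsPreconnected I) (ha : ∀ t ∈ I, DifferentiableAt ℝ a t)
    (hf : ∀ t ∈ I, DifferentiableAt ℝ f t)
    (hode : ∀ t ∈ I, a t * deriv f t + deriv a t * f t = 0) {x y : ℝ} (hx : x ∈ I) (hy : y ∈ I) :
    a x * f x = a y * f y := by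
  refine hIopen.is_const_of_deriv_eq_zero (f := a * f) hIconn
    (fun t ht => ((ha t ht).mul (hf t ht)).differentiableWithinAt) (fun t ht => ?_) hx hy
  rw [deriv_mul (ha t ht) (hf t ht), Pi.zero_apply, ← hode t ht]
  ring

theorem forall_eq_sqrt_div_or_forall_eq_neg_sqrt_div {k : ℝ}
    (hconst : ∀ x ∈ I, ∀ y ∈ I, a x * g x = a y * g y) (ha : ∀ t ∈ I, a t ≠ 0)
    (hsq : ∀ t ∈ I, g t ^ 2 * a t ^ 2 = k) :
    (∀ t ∈ I, g t = √k / a t) ∨ (∀ t ∈ I, g t = -√k / a t) := by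
  by_contra! ⟨⟨x, hx, hxk⟩, ⟨y, hy, hyk⟩⟩
  have hsqrt : √k = |a x * g x| := by rw [← hsq x hx, ← sqrt_sq_eq_abs]; ring_nf
  rcases abs_choice (a x * g x) with h | h
  · exact hxk <| by rw [eq_div_iff (ha x hx), hsqrt, h]; ring
  · exact hyk <| by rw [eq_div_iff (ha y hy), hsqrt, h, mul_comm, ← hconst x hx y hy, neg_neg]

theorem eq_zero_and_eq_sqrt_div_of_pos (hIopen : IsOpen I) (hIconn : IsPreconnected I)
    (ha : ∀ t ∈ I, DifferentiableAt ℝ a t) (hg : ∀ t ∈ I, DifferentiableAt ℝ g t)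
    (ha0 : ∀ t ∈ I, a t ≠ 0) (hode : ∀ t ∈ I, a t * deriv g t + deriv a t * g t = 0)
    (hfg : ∀ t ∈ I, f t * g t = 0) {k : ℝ} (hk : ∀ t ∈ I, g t ^ 2 * a t ^ 2 - f t ^ 2 * a t ^ 2 = k)
    (hpos : 0 < k) :
    (∀ t ∈ I, f t = 0) ∧ ((∀ t ∈ I, g t = √k / a t) ∨ (∀ t ∈ I, g t = -√k / a t)) := by
  have hf0 : ∀ t ∈ I, f t = 0 := by
    intro t ht
    rcases mul_eq_zero.1 (hfg t ht) with h | h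
    · exact h
    · have hkt := hk t ht
      rw [h] at hkt
      nlinarith [sq_nonneg (f t * a t)]
  refine ⟨hf0, forall_eq_sqrt_div_or_forall_eq_neg_sqrt_div
    (fun x hx y hy => mul_eq_mul_of_mul_deriv_add_deriv_mul_eq_zero hIopen hIconn ha hg hode hx hy)
    ha0 fun t ht => ?_⟩
  simpa [hf0 t ht] using hk t ht

end

theorem eq_zero_and_eq_zero_of_mul_eq_zero {x y a : ℝ} (ha : a ≠ 0) (hxy : x * y = 0)
    (h : y ^ 2 * a ^ 2 - x ^ 2 * a ^ 2 = 0) : x = 0 ∧ y = 0 := by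
  rcases mul_eq_zero.1 hxy with rfl | rfl <;> simp_all

/-- Solving the Robertson–Walker flatness (zero-curvature) conditions:
    on an open interval I, differentiable a : I → (0,∞) and W₁, W₂ with
    a W₁′ + a′ W₁ = 0, W₁ W₂ = 0, a W₂′ + a′ W₂ = 0 and W₂²a² − W₁²a² = k
    force exactly one of the three alternatives (i), (ii), (iii). -/
theorem RW_flatness_ODE_solutions (k : ℝ) (I : Set ℝ)
    (hIopen : IsOpen I) (hIord : I.OrdConnected)
    (a W1 W2 : ℝ → ℝ)
    (haDiff : ∀ t ∈ I, DifferentiableAt ℝ a t)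
    (hW1Diff : ∀ t ∈ I, DifferentiableAt ℝ W1 t)
    (hW2Diff : ∀ t ∈ I, DifferentiableAt ℝ W2 t)
    (haPos : ∀ t ∈ I, 0 < a t)
    (heq1 : ∀ t ∈ I, a t * deriv W1 t + deriv a t * W1 t = 0)
    (heq2 : ∀ t ∈ I, W1 t * W2 t = 0)
    (heq3 : ∀ t ∈ I, a t * deriv W2 t + deriv a t * W2 t = 0)
    (heq4 : ∀ t ∈ I, (W2 t) ^ 2 * (a t) ^ 2 - (W1 t) ^ 2 * (a t) ^ 2 = k) :
    (0 < k ∧ (∀ t ∈ I, W1 t = 0) ∧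
        ((∀ t ∈ I, W2 t = Real.sqrt k / a t) ∨ (∀ t ∈ I, W2 t = -(Real.sqrt k) / a t)) ∧
      ¬(k < 0 ∧ (∀ t ∈ I, W2 t = 0) ∧
        ((∀ t ∈ I, W1 t = Real.sqrt (-k) / a t) ∨ (∀ t ∈ I, W1 t = -(Real.sqrt (-k)) / a t))) ∧
      ¬(k = 0 ∧ (∀ t ∈ I, W1 t = 0) ∧ (∀ t ∈ I, W2 t = 0))) ∨
    (¬(0 < k ∧ (∀ t ∈ I, W1 t = 0) ∧
        ((∀ t ∈ I, W2 t = Real.sqrt k / a t) ∨ (∀ t ∈ I, W2 t = -(Real.sqrt k) / a t))) ∧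
      (k < 0 ∧ (∀ t ∈ I, W2 t = 0) ∧
        ((∀ t ∈ I, W1 t = Real.sqrt (-k) / a t) ∨ (∀ t ∈ I, W1 t = -(Real.sqrt (-k)) / a t))) ∧
      ¬(k = 0 ∧ (∀ t ∈ I, W1 t = 0) ∧ (∀ t ∈ I, W2 t = 0))) ∨
    (¬(0 < k ∧ (∀ t ∈ I, W1 t = 0) ∧
        ((∀ t ∈ I, W2 t = Real.sqrt k / a t) ∨ (∀ t ∈ I, W2 t = -(Real.sqrt k) / a t))) ∧
      ¬(k < 0 ∧ (∀ t ∈ I, W2 t = 0) ∧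
        ((∀ t ∈ I, W1 t = Real.sqrt (-k) / a t) ∨ (∀ t ∈ I, W1 t = -(Real.sqrt (-k)) / a t))) ∧
      (k = 0 ∧ (∀ t ∈ I, W1 t = 0) ∧ (∀ t ∈ I, W2 t = 0))) := by
  have ha0 : ∀ t ∈ I, a t ≠ 0 := fun t ht => (haPos t ht).ne'
  refine exactlyOne_of_trichotomy (fun hk => ?_) (fun hk => ?_) (fun hk => ?_)
  · exact eq_zero_and_eq_sqrt_div_of_pos hIopen hIord.isPreconnected haDiff hW2Diff ha0 heq3
      heq2 heq4 hk
  · exact eq_zero_and_eq_sqrt_div_of_pos hIopen hIord.isPreconnected haDiff hW1Diff ha0 heq1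
      (fun t ht => by rw [mul_comm, heq2 t ht]) (fun t ht => by linarith [heq4 t ht])
      (neg_pos.2 hk)
  · have hzero t (ht : t ∈ I) :=
      eq_zero_and_eq_zero_of_mul_eq_zero (ha0 t ht) (heq2 t ht) (hk ▸ heq4 t ht)
    exact ⟨fun t ht => (hzero t ht).1, fun t ht => (hzero t ht).2⟩
end
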